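/- arXiv:2001.01066 — 6 statements merged into one kernel-verified Lean document; each statement's English description precedes it below -/
import Mathlib

section
/- A W-orbit O on ℤ² satisfies O ∩ (P⁺ ∪ −P⁺) = ∅ if and only if O contains a point of the form (k, −l) with k, l positive integers such that either l ≤ k < (a−1)l or k < l ≤ (b−1)k. -/
/-- Simple reflection `r1 : (x, y) ↦ (-x, y + b x)` on the weight lattice `ℤ × ℤ`. -/
def r1 (b : ℤ) : Equiv.Perm (ℤ × ℤ) :=
  Function.Involutive.toPerm (fun v => (-v.1, v.2 + b * v.1))
    (fun v => by simp [Prod.ext_iff])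

/-- Simple reflection `r2 : (x, y) ↦ (x + a y, -y)` on the weight lattice `ℤ × ℤ`. -/
def r2 (a : ℤ) : Equiv.Perm (ℤ × ℤ) :=
  Function.Involutive.toPerm (fun v => (v.1 + a * v.2, -v.2))
    (fun v => by simp [Prod.ext_iff])

/-- The Weyl group `W`, the group of bijections of `ℤ × ℤ` generated by `r1` and `r2`. -/
def W (a b : ℤ) : Subgroup (Equiv.Perm (ℤ × ℤ)) :=
  Subgroup.closure {r1 b, r2 a}

/-- The `W`-orbit of a point `v ∈ ℤ × ℤ`. -/
def Worbit (a b : ℤ) (v : ℤ × ℤ) : Set (ℤ × ℤ) :=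
  {w : ℤ × ℤ | ∃ g ∈ W a b, g v = w}

/-- The set of dominant integral weights `P⁺`. -/
def Pplus : Set (ℤ × ℤ) := {v : ℤ × ℤ | 0 ≤ v.1 ∧ 0 ≤ v.2}

/-- The set of antidominant integral weights `-P⁺`. -/
def Pminus : Set (ℤ × ℤ) := {v : ℤ × ℤ | v.1 ≤ 0 ∧ v.2 ≤ 0}

/-- The invariant quadratic form. -/
def QF (a b : ℤ) (v : ℤ × ℤ) : ℤ := b * v.1 ^ 2 + a * b * (v.1 * v.2) + a * v.2 ^ 2

lemma r1_apply (b x y : ℤ) : r1 b (x, y) = (-x, y + b * x) := rfl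

lemma r2_apply (a x y : ℤ) : r2 a (x, y) = (x + a * y, -y) := rfl

lemma r1_mem (a b : ℤ) : r1 b ∈ W a b :=
  Subgroup.subset_closure (Set.mem_insert _ _)

lemma r2_mem (a b : ℤ) : r2 a ∈ W a b :=
  Subgroup.subset_closure (Set.mem_insert_of_mem _ rfl)

lemma QF_W_inv (a b : ℤ) {g : Equiv.Perm (ℤ × ℤ)} (hg : g ∈ W a b) (v : ℤ × ℤ) :
    QF a b (g v) = QF a b v := by
  let H : Subgroup (Equiv.Perm (ℤ × ℤ)) :=
    { carrier := {g | ∀ v, QF a b (g v) = QF a b v}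
      one_mem' := fun v => rfl
      mul_mem' := by
        intro g1 g2 h1 h2 v
        have : (g1 * g2) v = g1 (g2 v) := rfl
        rw [this, h1, h2]
      inv_mem' := by
        intro g1 h1 v
        have := h1 (g1⁻¹ v)
        rw [show g1 (g1⁻¹ v) = v from g1.apply_symm_apply v] at this
        exact this.symm }
  have hle : W a b ≤ H := by
    apply (Subgroup.closure_le H).2
    intro x hx
    rcases hx with hx | hx
    · subst hx
      intro w
      obtain ⟨x, y⟩ := w
      rw [r1_apply]
      simp only [QF]
      ring
    · simp only [Set.mem_singleton_iff] at hx
      subst hx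
      intro w
      obtain ⟨x, y⟩ := w
      rw [r2_apply]
      simp only [QF]
      ring
  exact hle hg v

lemma self_mem_Worbit (a b : ℤ) (v : ℤ × ℤ) : v ∈ Worbit a b v :=
  ⟨1, one_mem _, rfl⟩

lemma Worbit_apply_mem (a b : ℤ) {g : Equiv.Perm (ℤ × ℤ)} (hg : g ∈ W a b) {v w : ℤ × ℤ}
    (hw : w ∈ Worbit a b v) : g w ∈ Worbit a b v := by
  obtain ⟨h, hh, rfl⟩ := hw
  exact ⟨g * h, mul_mem hg hh, rfl⟩

lemma ab_gt (a b : ℤ) (ha : 2 ≤ a) (hb : 2 ≤ b) (hab : 4 < a * b) : a + b < a * b := by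
  nlinarith [mul_nonneg (by linarith : (0:ℤ) ≤ a - 2) (by linarith : (0:ℤ) ≤ b - 2)]

lemma QF_neg_of_S (a b : ℤ) (ha : 2 ≤ a) (hb : 2 ≤ b) (hab : 4 < a * b) (k l : ℤ)
    (hk : 0 < k) (hl : 0 < l)
    (hS : (l ≤ k ∧ k < (a - 1) * l) ∨ (k < l ∧ l ≤ (b - 1) * k)) :
    QF a b (k, -l) < 0 := by
  have h5 := ab_gt a b ha hb hab
  simp only [QF]
  rcases hS with ⟨h1, h2⟩ | ⟨h1, h2⟩
  · have key : b * k ^ 2 + a * b * (k * (-l)) + a * (-l) ^ 2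
        = b * ((k - l) * (k - (a - 1) * l)) + (a + b - a * b) * l ^ 2 := by ring
    rw [key]
    have h6 : (k - l) * (k - (a - 1) * l) ≤ 0 :=
      mul_nonpos_of_nonneg_of_nonpos (by linarith) (by linarith)
    nlinarith [sq_nonneg l, mul_pos hl hl]
  · have key : b * k ^ 2 + a * b * (k * (-l)) + a * (-l) ^ 2
        = a * ((l - k) * (l - (b - 1) * k)) + (a + b - a * b) * k ^ 2 := by ring
    rw [key]
    have h6 : (l - k) * (l - (b - 1) * k) ≤ 0 :=
      mul_nonpos_of_nonneg_of_nonpos (by linarith) (by linarith)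
    nlinarith [sq_nonneg k, mul_pos hk hk]

lemma QF_nonneg_of_cone (a b : ℤ) (ha : 2 ≤ a) (hb : 2 ≤ b) {w : ℤ × ℤ}
    (hw : w ∈ Pplus ∪ Pminus) : 0 ≤ QF a b w := by
  obtain ⟨x, y⟩ := w
  simp only [Pplus, Pminus, Set.mem_union, Set.mem_setOf_eq] at hw
  simp only [QF]
  have h1 : (0:ℤ) ≤ b * x ^ 2 := mul_nonneg (by linarith) (sq_nonneg x)
  have h2 : (0:ℤ) ≤ a * y ^ 2 := mul_nonneg (by linarith) (sq_nonneg y)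
  have hxy : (0:ℤ) ≤ x * y := by
    rcases hw with ⟨hx, hy⟩ | ⟨hx, hy⟩
    · exact mul_nonneg hx hy
    · have : (0:ℤ) ≤ (-x) * (-y) := mul_nonneg (by linarith) (by linarith)
      linarith [this, (by ring : (-x) * (-y) = x * y)]
  have h3 : (0:ℤ) ≤ a * b * (x * y) :=
    mul_nonneg (mul_nonneg (by linarith) (by linarith)) hxy
  linarith

lemma descent (a b : ℤ) (ha : 2 ≤ a) (hb : 2 ≤ b) (hab : 4 < a * b) (v : ℤ × ℤ)
    (hav : ∀ w ∈ Worbit a b v, w ∉ Pplus ∧ w ∉ Pminus) :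
    ∀ n : ℕ, ∀ k l : ℤ, 0 < k → 0 < l → k + l ≤ (n : ℤ) → (k, -l) ∈ Worbit a b v →
      ∃ k' l' : ℤ, 0 < k' ∧ 0 < l' ∧ k' < (a - 1) * l' ∧ l' ≤ (b - 1) * k' ∧
        (k', -l') ∈ Worbit a b v := by
  intro n
  induction n with
  | zero =>
    intro k l hk hl hsum _
    exfalso
    simp only [Nat.cast_zero] at hsum
    omega
  | succ n ih =>
    intro k l hk hl hsum hmem
    by_cases hS : k < (a - 1) * l ∧ l ≤ (b - 1) * k
    · exact ⟨k, l, hk, hl, hS.1, hS.2, hmem⟩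
    rcases not_and_or.mp hS with hf1 | hf2
    · -- type 1 failure : k ≥ (a-1) l
      push_neg at hf1
      have hw1 : ((k + a * -l, l) : ℤ × ℤ) ∈ Worbit a b v := by
        have h := Worbit_apply_mem a b (r2_mem a b) hmem
        rwa [r2_apply, neg_neg] at h
      have hnp1 := (hav _ hw1).1
      simp only [Pplus, Set.mem_setOf_eq, not_and, not_le] at hnp1
      have hk1pos : 0 < a * l - k := by
        by_contra h
        push_neg at h
        have := hnp1 (by linarith)
        linarith
      set k1 : ℤ := a * l - k with hk1def
      have hk1le : k1 ≤ l := by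
        have : (a - 1) * l ≤ k := hf1
        simp only [hk1def]
        linarith
      have hw2' := Worbit_apply_mem a b (r1_mem a b) hw1
      rw [r1_apply] at hw2'
      have heq : ((-(k + a * -l), l + b * (k + a * -l)) : ℤ × ℤ)
          = (k1, -(b * k1 - l)) := by
        simp only [Prod.mk.injEq, hk1def]
        constructor <;> ring
      rw [heq] at hw2'
      set l1 : ℤ := b * k1 - l with hl1def
      have hnp2 := (hav _ hw2').1
      simp only [Pplus, Set.mem_setOf_eq, not_and, not_le] at hnp2
      have hl1pos : 0 < l1 := by
        have := hnp2 (by linarith)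
        linarith
      by_cases hS1 : k1 < (a - 1) * l1 ∧ l1 ≤ (b - 1) * k1
      · exact ⟨k1, l1, hk1pos, hl1pos, hS1.1, hS1.2, hw2'⟩
      have hfail : (a - 1) * l1 ≤ k1 := by
        rcases not_and_or.mp hS1 with h | h
        · push_neg at h; linarith
        · push_neg at h
          exfalso
          -- l1 > (b-1) k1 means b k1 - l > (b-1) k1, so k1 > l, contradiction
          have : l < k1 := by linarith [hl1def]
          linarith
      have h3 : 3 ≤ (a - 1) * b := by nlinarith
      have hll : ((a - 1) * b - 1) * l1 ≤ l := by
        have h4 : (a - 1) * l1 ≤ k1 := hfail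
        have h5 : b * ((a - 1) * l1) ≤ b * k1 :=
          mul_le_mul_of_nonneg_left h4 (by linarith)
        nlinarith
      have h2l : 2 * l1 ≤ l := by nlinarith
      have hsum' : k1 + l1 ≤ (n : ℤ) := by
        have hlk : l ≤ k := by nlinarith
        push_cast at hsum ⊢
        omega
      exact ih k1 l1 hk1pos hl1pos hsum' hw2'
    · -- type 2 failure : l > (b-1) k
      push_neg at hf2
      have hw1 : ((-k, -l + b * k) : ℤ × ℤ) ∈ Worbit a b v := by
        have h := Worbit_apply_mem a b (r1_mem a b) hmem
        rwa [r1_apply] at h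
      have hnm1 := (hav _ hw1).2
      simp only [Pminus, Set.mem_setOf_eq, not_and, not_le] at hnm1
      have hmpos : 0 < b * k - l := by
        have := hnm1 (by linarith)
        linarith
      set m : ℤ := b * k - l with hmdef
      have hmlt : m < k := by
        have : (b - 1) * k < l := hf2
        simp only [hmdef]
        linarith
      have hw2' := Worbit_apply_mem a b (r2_mem a b) hw1
      rw [r2_apply] at hw2'
      have heq : ((-k + a * (-l + b * k), -(-l + b * k)) : ℤ × ℤ)
          = (a * m - k, -m) := by
        simp only [Prod.mk.injEq, hmdef]
        constructor <;> ring
      rw [heq] at hw2'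
      set k1 : ℤ := a * m - k with hk1def
      have hnm2 := (hav _ hw2').2
      simp only [Pminus, Set.mem_setOf_eq, not_and, not_le] at hnm2
      have hk1pos : 0 < k1 := by
        have := hnm2
        by_contra h
        push_neg at h
        have := hnm2 (by linarith)
        linarith
      by_cases hS1 : k1 < (a - 1) * m ∧ m ≤ (b - 1) * k1
      · exact ⟨k1, m, hk1pos, hmpos, hS1.1, hS1.2, hw2'⟩
      have hfail : (b - 1) * k1 < m := by
        rcases not_and_or.mp hS1 with h | h
        · push_neg at h
          exfalso
          -- k1 ≥ (a-1) m means a m - k ≥ (a-1) m, so m ≥ k, contradiction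
          have : k ≤ m := by linarith [hk1def]
          linarith
        · push_neg at h; exact h
      have h3 : 3 ≤ a * (b - 1) := by nlinarith
      have hkk : (a * (b - 1) - 1) * k1 < k := by
        have h4 : (b - 1) * k1 < m := hfail
        have h5 : a * ((b - 1) * k1) < a * m :=
          mul_lt_mul_of_pos_left h4 (by linarith)
        nlinarith
      have h2k : 2 * k1 < k := by nlinarith
      have hsum' : k1 + m ≤ (n : ℤ) := by
        have hkl : k < l := by nlinarith
        push_cast at hsum ⊢
        omega
      exact ih k1 m hk1pos hmpos hsum' hw2'

theorem orbit_avoids_dominant_iff (a b : ℤ) (ha : 2 ≤ a) (hb : 2 ≤ b) (hab : 4 < a * b)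
    (v : ℤ × ℤ) :
    Worbit a b v ∩ (Pplus ∪ Pminus) = ∅ ↔
      ∃ k l : ℤ, 0 < k ∧ 0 < l ∧
        ((l ≤ k ∧ k < (a - 1) * l) ∨ (k < l ∧ l ≤ (b - 1) * k)) ∧
        (k, -l) ∈ Worbit a b v := by
  constructor
  · intro h
    have hav : ∀ w ∈ Worbit a b v, w ∉ Pplus ∧ w ∉ Pminus := by
      intro w hw
      constructor <;> intro hmem
      · exact Set.eq_empty_iff_forall_notMem.mp h w ⟨hw, Or.inl hmem⟩
      · exact Set.eq_empty_iff_forall_notMem.mp h w ⟨hw, Or.inr hmem⟩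
    obtain ⟨x, y⟩ := v
    have hv0 : ((x, y) : ℤ × ℤ) ∈ Worbit a b (x, y) := self_mem_Worbit a b _
    have hnotP := hav _ hv0
    simp only [Pplus, Pminus, Set.mem_setOf_eq, not_and, not_le] at hnotP
    -- determine signs
    have hstart : ∃ k l : ℤ, 0 < k ∧ 0 < l ∧ ((k, -l) : ℤ × ℤ) ∈ Worbit a b (x, y) := by
      rcases le_or_gt 0 x with hx | hx
      · have hy : y < 0 := hnotP.1 hx
        have hxpos : 0 < x := by
          rcases lt_or_eq_of_le hx with h | h
          · exact h
          · exfalso; exact absurd (hnotP.2 (le_of_eq h.symm)) (by linarith)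
        refine ⟨x, -y, hxpos, by linarith, ?_⟩
        simpa [neg_neg] using hv0
      · have hy : 0 < y := by
          by_contra h
          push_neg at h
          exact absurd (hnotP.2 (by linarith)) (by linarith)
        have hw1 : ((-x, y + b * x) : ℤ × ℤ) ∈ Worbit a b (x, y) := by
          have h := Worbit_apply_mem a b (r1_mem a b) hv0
          rwa [r1_apply] at h
        have hnp := (hav _ hw1).1
        simp only [Pplus, Set.mem_setOf_eq, not_and, not_le] at hnp
        have hneg : y + b * x < 0 := hnp (by linarith)
        refine ⟨-x, -(y + b * x), by linarith, by linarith, ?_⟩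
        simpa [neg_neg] using hw1
      -- end
    obtain ⟨k, l, hk, hl, hmem⟩ := hstart
    obtain ⟨k', l', hk', hl', hc1, hc2, hmem'⟩ :=
      descent a b ha hb hab (x, y) hav (k + l).toNat k l hk hl (by omega) hmem
    refine ⟨k', l', hk', hl', ?_, hmem'⟩
    rcases le_or_gt l' k' with h | h
    · exact Or.inl ⟨h, hc1⟩
    · exact Or.inr ⟨h, hc2⟩
  · rintro ⟨k, l, hk, hl, hS, hmem⟩
    rw [Set.eq_empty_iff_forall_notMem]
    rintro w ⟨hw, hcone⟩
    obtain ⟨g1, hg1, e1⟩ := hmem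
    obtain ⟨g2, hg2, e2⟩ := hw
    have hq1 : QF a b (k, -l) = QF a b v := by rw [← e1, QF_W_inv a b hg1]
    have hq2 : QF a b w = QF a b v := by rw [← e2, QF_W_inv a b hg2]
    have hneg := QF_neg_of_S a b ha hb hab k l hk hl hS
    have hpos := QF_nonneg_of_cone a b ha hb hcone
    omega
end

section
/- If there exists an integer n' ≥ 0 such that 0 < p(n') < p(n'+1), then 0 < p(n) < p(n+1) for all integers n ≥ n'. -/
/-- `pSeq a b k l p` says that `p : ℤ → ℤ` is the (unique) sequence with `p 0 = l`,
`p 1 = k`, and `p (m+2) = b * p (m+1) - p m` for even `m`,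
`p (m+2) = a * p (m+1) - p m` for odd `m`. -/
def pSeq (a b k l : ℤ) (p : ℤ → ℤ) : Prop :=
  p 0 = l ∧ p 1 = k ∧
    ∀ m : ℤ, p (m + 2) = (if Even m then b else a) * p (m + 1) - p m

section TwoTermRecurrence

variable {c p : ℤ → ℤ} (hc : ∀ m, 2 ≤ c m) (hrec : ∀ m, p (m + 2) = c m * p (m + 1) - p m)
include hc hrec

/- The increment grows: `p (m+2) - p (m+1) = (c m - 2) * p (m+1) + (p (m+1) - p m)`. -/
theorem pos_and_lt_succ_step {m : ℤ} (hpos : 0 < p m) (hlt : p m < p (m + 1)) :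
    0 < p (m + 1) ∧ p (m + 1) < p (m + 1 + 1) := by
  have hpos' : 0 < p (m + 1) := hpos.trans hlt
  refine ⟨hpos', ?_⟩
  rw [add_assoc, one_add_one_eq_two, hrec m]
  nlinarith [mul_le_mul_of_nonneg_right (hc m) hpos'.le]

theorem pos_and_lt_succ_of_le {n₀ : ℤ} (hpos : 0 < p n₀) (hlt : p n₀ < p (n₀ + 1)) :
    ∀ n, n₀ ≤ n → 0 < p n ∧ p n < p (n + 1) :=
  Int.leInduction ⟨hpos, hlt⟩ fun _ _ ih => pos_and_lt_succ_step hc hrec ih.1 ih.2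

end TwoTermRecurrence

theorem p_increasing_of_exists_general (a b k l : ℤ) (ha : 2 ≤ a) (hb : 2 ≤ b)
    (p : ℤ → ℤ) (hp : pSeq a b k l p)
    (n' : ℤ) (h1 : 0 < p n') (h2 : p n' < p (n' + 1)) :
    ∀ n : ℤ, n' ≤ n → 0 < p n ∧ p n < p (n + 1) :=
  pos_and_lt_succ_of_le (fun m => by split_ifs <;> assumption) hp.2.2 h1 h2

theorem p_increasing_of_exists (a b k l : ℤ) (ha : 2 ≤ a) (hb : 2 ≤ b) (hab : 4 < a * b)
    (p : ℤ → ℤ) (hp : pSeq a b k l p)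
    (n' : ℤ) (hn' : 0 ≤ n') (h1 : 0 < p n') (h2 : p n' < p (n' + 1)) :
    ∀ n : ℤ, n' ≤ n → 0 < p n ∧ p n < p (n + 1) :=
  p_increasing_of_exists_general a b k l ha hb p hp n' h1 h2
end

section
/- If there exists an integer n' ≤ 1 such that 0 < p(n') < p(n'−1), then 0 < p(n) < p(n−1) for all integers n ≤ n'. -/
/-! Read backwards, the recurrence is `p (m - 2) = c * p (m - 1) - p m` with `c ≥ 2`, so
`p (m - 2) - p (m - 1) ≥ p (m - 1) - p m`: a positive step down at `n'` propagates to every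
`n ≤ n'`. -/

section

variable {R : Type*} [CommRing R] [LinearOrder R] [IsStrictOrderedRing R]

theorem pos_and_lt_of_eq_mul_sub {x y z c : R} (hc : 2 ≤ c) (hz : z = c * y - x)
    (hz_pos : 0 < z) (hzy : z < y) : 0 < y ∧ y < x := by
  have hy : 0 < y := hz_pos.trans hzy
  refine ⟨hy, ?_⟩
  calc y < 2 * y - z := by linarith
    _ ≤ c * y - z := by gcongr
    _ = x := by rw [hz, sub_sub_cancel]

theorem pos_and_lt_sub_one_of_le {p c : ℤ → R} (hc : ∀ m, 2 ≤ c m)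
    (hrec : ∀ m, p (m + 2) = c m * p (m + 1) - p m) {n' : ℤ}
    (h : 0 < p n' ∧ p n' < p (n' - 1)) : ∀ n ≤ n', 0 < p n ∧ p n < p (n - 1) := by
  refine Int.leInductionDown h fun n _ ⟨hpos, hlt⟩ ↦ ?_
  have hrec' := hrec (n - 1 - 1)
  rw [show n - 1 - 1 + 2 = n by ring, show n - 1 - 1 + 1 = n - 1 by ring] at hrec'
  exact pos_and_lt_of_eq_mul_sub (hc _) hrec' hpos hlt

end

theorem p_decreasing_of_exists_general (a b k l : ℤ) (ha : 2 ≤ a) (hb : 2 ≤ b)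
    (p : ℤ → ℤ) (hp : pSeq a b k l p)
    (n' : ℤ) (h1 : 0 < p n') (h2 : p n' < p (n' - 1)) :
    ∀ n : ℤ, n ≤ n' → 0 < p n ∧ p n < p (n - 1) :=
  pos_and_lt_sub_one_of_le (fun m ↦ by split_ifs <;> assumption) hp.2.2 ⟨h1, h2⟩

theorem p_decreasing_of_exists (a b k l : ℤ) (ha : 2 ≤ a) (hb : 2 ≤ b) (hab : 4 < a * b)
    (p : ℤ → ℤ) (hp : pSeq a b k l p)
    (n' : ℤ) (hn' : n' ≤ 1) (h1 : 0 < p n') (h2 : p n' < p (n' - 1)) :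
    ∀ n : ℤ, n ≤ n' → 0 < p n ∧ p n < p (n - 1) :=
  p_decreasing_of_exists_general a b k l ha hb p hp n' h1 h2
end

section
/- Let k, l be positive integers with l < k < (a−1)l. Then p(m) > 0 for all m ∈ ℤ, p(m) < p(m+1) for all m ≥ 0, and p(m) > p(m+1) for all m ≤ −1; that is, the sequence satisfies ⋯ > p(−1) > p(0) = l < p(1) = k < p(2) < ⋯. -/
theorem strictMono_of_recurrence_of_two_le {R : Type*} [CommRing R] [LinearOrder R]
    [IsStrictOrderedRing R] {q c : ℕ → R} (hc : ∀ n, 2 ≤ c n)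
    (hq : ∀ n, q (n + 2) = c n * q (n + 1) - q n) (h0 : 0 < q 0) (h01 : q 0 < q 1) :
    StrictMono q := by
  have step : ∀ n, 0 < q n ∧ q n < q (n + 1) := by
    intro n
    induction n with
    | zero => exact ⟨h0, h01⟩
    | succ n ih =>
      obtain ⟨hpos, hlt⟩ := ih
      have hc2 : 0 ≤ (c n - 2) * q (n + 1) := mul_nonneg (sub_nonneg.2 (hc n)) (hpos.trans hlt).le
      refine ⟨hpos.trans hlt, ?_⟩
      rw [hq n]
      linarith
  exact strictMono_nat_of_lt_succ fun n => (step n).2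

namespace pSeq

variable {a b k l : ℤ} {p : ℤ → ℤ}

theorem reflect (hp : pSeq a b k l p) : pSeq a b (a * l - k) l (fun m => p (-m)) := by
  obtain ⟨hp0, hp1, hrec⟩ := hp
  refine ⟨by simpa using hp0, ?_, fun m => ?_⟩
  · have h := hrec (-1)
    simp only [show ¬ Even (-1 : ℤ) by decide, if_false] at h
    norm_num [hp0, hp1] at h ⊢
    linarith
  · have h := hrec (-(m + 2))
    have hparity : Even (-(m + 2)) ↔ Even m := by
      simp [even_neg, Int.even_add]
    rw [if_congr hparity rfl rfl, show -(m + 2) + 2 = -m by ring,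
      show -(m + 2) + 1 = -(m + 1) by ring] at h
    dsimp only
    linarith

theorem strictMono_natCast (hp : pSeq a b k l p) (ha : 2 ≤ a) (hb : 2 ≤ b) (hl : 0 < l)
    (hlk : l < k) : StrictMono fun n : ℕ => p n := by
  obtain ⟨hp0, hp1, hrec⟩ := hp
  refine strictMono_of_recurrence_of_two_le (c := fun n : ℕ => if Even (n : ℤ) then b else a)
    (fun n => by split <;> assumption) (fun n => by exact_mod_cast hrec n) ?_ ?_
  · simpa [hp0] using hl
  · simpa [hp0, hp1] using hlk

end pSeq

theorem p_valley_case_i_general (a b k l : ℤ) (ha : 2 ≤ a) (hb : 2 ≤ b)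
    (hl : 0 < l) (hlk : l < k) (hka : k < (a - 1) * l)
    (p : ℤ → ℤ) (hp : pSeq a b k l p) :
    (∀ m : ℤ, 0 < p m) ∧ (∀ m : ℤ, 0 ≤ m → p m < p (m + 1)) ∧
      (∀ m : ℤ, m ≤ -1 → p (m + 1) < p m) := by
  have forward := hp.strictMono_natCast ha hb hl hlk
  have backward := hp.reflect.strictMono_natCast ha hb hl (by linarith)
  have hp0 : p 0 = l := hp.1
  refine ⟨fun m => ?_, fun m hm => ?_, fun m hm => ?_⟩
  · obtain ⟨n, rfl | rfl⟩ := Int.eq_nat_or_neg m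
    · exact lt_of_lt_of_le (by simpa [hp0] using hl) (forward.monotone n.zero_le)
    · exact lt_of_lt_of_le (by simpa [hp0] using hl) (backward.monotone n.zero_le)
  · lift m to ℕ using hm
    exact_mod_cast forward m.lt_succ_self
  · obtain ⟨n, rfl⟩ : ∃ n : ℕ, m = -(n + 1) := ⟨(-m - 1).toNat, by omega⟩
    simpa [neg_add] using backward n.lt_succ_self

theorem p_valley_case_i (a b k l : ℤ) (ha : 2 ≤ a) (hb : 2 ≤ b) (hab : 4 < a * b)
    (hl : 0 < l) (hlk : l < k) (hka : k < (a - 1) * l)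
    (p : ℤ → ℤ) (hp : pSeq a b k l p) :
    (∀ m : ℤ, 0 < p m) ∧ (∀ m : ℤ, 0 ≤ m → p m < p (m + 1)) ∧
      (∀ m : ℤ, m ≤ -1 → p (m + 1) < p m) :=
  p_valley_case_i_general a b k l ha hb hl hlk hka p hp
end

section
/- Under the stated assumptions, 0 < q(m) < p(m) for all m ∈ ℤ. -/
def IsAltRecurrence (a b : ℤ) (s : ℤ → ℤ) : Prop :=
  ∀ m : ℤ, s (m + 2) = (if Even m then b else a) * s (m + 1) - s m

namespace IsAltRecurrence

variable {a b : ℤ} {s t : ℤ → ℤ}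

lemma sub (hs : IsAltRecurrence a b s) (ht : IsAltRecurrence a b t) :
    IsAltRecurrence a b (s - t) := by
  intro m
  simp only [Pi.sub_apply, hs m, ht m]
  ring

lemma comp_neg (hs : IsAltRecurrence a b s) : IsAltRecurrence a b (fun m ↦ s (-m)) := by
  intro m
  have h := hs (-(m + 2))
  have hparity : Even (-(m + 2)) ↔ Even m := by
    rw [even_neg, Int.even_add, iff_true_right even_two]
  rw [if_congr hparity rfl rfl, show -(m + 2) + 2 = -m by ring,
    show -(m + 2) + 1 = -(m + 1) by ring] at h
  simp only
  linarith

lemma apply_neg_one (hs : IsAltRecurrence a b s) : s (-1) = a * s 0 - s 1 := by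
  have h := hs (-1)
  norm_num at h
  linarith

lemma pos_and_le_succ (ha : 2 ≤ a) (hb : 2 ≤ b) (hs : IsAltRecurrence a b s)
    (h0 : 0 < s 0) (h01 : s 0 ≤ s 1) {m : ℤ} (hm : 0 ≤ m) : 0 < s m ∧ s m ≤ s (m + 1) := by
  induction m, hm using Int.leInduction with
  | base => exact ⟨h0, h01⟩
  | succ m _ ih =>
    obtain ⟨hpos, hle⟩ := ih
    have hcoeff : 2 ≤ (if Even m then b else a) := by split_ifs <;> assumption
    have hconvex : 2 * s (m + 1) ≤ (if Even m then b else a) * s (m + 1) :=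
      mul_le_mul_of_nonneg_right hcoeff (hpos.trans_le hle).le
    refine ⟨hpos.trans_le hle, ?_⟩
    rw [add_assoc, one_add_one_eq_two, hs m]
    linarith

lemma pos (ha : 2 ≤ a) (hb : 2 ≤ b) (hs : IsAltRecurrence a b s)
    (h0 : 0 < s 0) (h01 : s 0 ≤ s 1) (h0neg : s 0 ≤ s (-1)) (m : ℤ) : 0 < s m := by
  rcases le_or_gt 0 m with hm | hm
  · exact (pos_and_le_succ ha hb hs h0 h01 hm).1
  · simpa using (pos_and_le_succ ha hb hs.comp_neg h0 (by simpa using h0neg)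
      (neg_nonneg.mpr hm.le)).1

end IsAltRecurrence

theorem q_pos_lt_p_general (a b k l : ℤ) (ha : 2 ≤ a) (hb : 2 ≤ b)
    (hl : 1 < l) (hlk : l < k) (hka : k < (a - 1) * l)
    (c : ℤ) (hc1 : 1 ≤ c)
    (hcl : (c : ℚ) / k < 1 / l) (hcr : (1 : ℚ) / l < (c + 1) / k)
    (p : ℤ → ℤ) (hp : pSeq a b k l p)
    (q : ℤ → ℤ) (hq : pSeq a b c 1 q) :
    ∀ m : ℤ, 0 < q m ∧ q m < p m := by
  obtain ⟨hp0, hp1, hpr⟩ := hp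
  obtain ⟨hq0, hq1, hqr⟩ := hq
  have hl0 : (0 : ℚ) < l := by exact_mod_cast (zero_lt_one.trans hl)
  have hk0 : (0 : ℚ) < k := by exact_mod_cast (zero_lt_one.trans (hl.trans hlk))
  have hclk : c * l < k := by
    rw [div_lt_div_iff₀ hk0 hl0, one_mul] at hcl
    exact_mod_cast hcl
  have hkcl : k < (c + 1) * l := by
    rw [div_lt_div_iff₀ hl0 hk0, one_mul] at hcr
    exact_mod_cast hcr
  have hca : c ≤ a - 2 := by
    have : c < a - 1 := lt_of_mul_lt_mul_right (hclk.trans hka) (by omega)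
    omega
  have hd : IsAltRecurrence a b (p - q) := IsAltRecurrence.sub hpr hqr
  have hpm1 := IsAltRecurrence.apply_neg_one hpr
  have hqm1 := IsAltRecurrence.apply_neg_one hqr
  intro m
  refine ⟨IsAltRecurrence.pos ha hb hqr ?_ ?_ ?_ m,
    sub_pos.mp (IsAltRecurrence.pos ha hb hd ?_ ?_ ?_ m)⟩ <;>
    simp only [Pi.sub_apply, hp0, hp1, hq0, hq1, hpm1, hqm1] <;>
    nlinarith

theorem q_pos_lt_p (a b k l : ℤ) (ha : 2 ≤ a) (hb : 2 ≤ b) (hab : 4 < a * b)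
    (hl : 1 < l) (hlk : l < k) (hka : k < (a - 1) * l) (hcop : IsCoprime k l)
    (c : ℤ) (hc1 : 1 ≤ c) (hck : c ≤ k - 1)
    (hcl : (c : ℚ) / k < 1 / l) (hcr : (1 : ℚ) / l < (c + 1) / k)
    (p : ℤ → ℤ) (hp : pSeq a b k l p)
    (q : ℤ → ℤ) (hq : pSeq a b c 1 q) :
    ∀ m : ℤ, 0 < q m ∧ q m < p m :=
  q_pos_lt_p_general a b k l ha hb hl hlk hka c hc1 hcl hcr p hp q hq
end

section
/- Under the stated assumptions, for every m ∈ ℤ the rational numbers q(m)/p(m) satisfy 0 < q(m+1)/p(m+1) < q(m)/p(m) < 1; in particular the sequence m ↦ q(m)/p(m) is strictly decreasing and takes values in the open interval (0, 1). -/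
/-!
Both `q` and `p - q` solve the recurrence with data forming a positive "valley"
(`r 0 > 0`, `r 1 ≥ r 0`, `r (-1) ≥ r 0`). Since the coefficients are at least `2`, a solution
is discretely convex wherever it is nonnegative, so it increases away from `0` in both directions
and stays positive; hence `0 < q < p`. The Casoratian `q (m+1) p m - q m p (m+1)` of the two
solutions is constant, equal to `c l - k < 0`, which is exactly `q (m+1) / p (m+1) < q m / p m`.
-/

theorem monotone_of_recurrence_two_le {r t : ℕ → ℤ} (ht : ∀ n, 2 ≤ t n)
    (hr : ∀ n, r (n + 2) = t n * r (n + 1) - r n) (h0 : 0 < r 0) (h01 : r 0 ≤ r 1) :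
    Monotone r := by
  have step : ∀ n, r 0 ≤ r n ∧ r n ≤ r (n + 1) := by
    intro n
    induction n with
    | zero => exact ⟨le_rfl, h01⟩
    | succ n ih =>
      refine ⟨ih.1.trans ih.2, ?_⟩
      nlinarith [hr n, ht n]
  exact monotone_nat_of_le_succ fun n => (step n).2

theorem pos_of_recurrence_two_le {r t : ℤ → ℤ} (ht : ∀ m, 2 ≤ t m)
    (hr : ∀ m, r (m + 2) = t m * r (m + 1) - r m)
    (h0 : 0 < r 0) (h1 : r 0 ≤ r 1) (hm1 : r 0 ≤ r (-1)) (m : ℤ) : 0 < r m := by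
  have forward : Monotone fun n : ℕ => r n :=
    monotone_of_recurrence_two_le (fun n => ht n) (fun n => by push_cast; exact hr n) h0 h1
  -- The reflected sequence `n ↦ r (-n)` satisfies the recurrence with coefficients `t (-n-2)`.
  have backward : Monotone fun n : ℕ => r (-n) := by
    refine monotone_of_recurrence_two_le (t := fun n => t (-n - 2)) (fun n => ht _) (fun n => ?_)
      (by simpa using h0) (by simpa using hm1)
    have := hr (-n - 2)
    push_cast
    rw [show -(n : ℤ) - 2 + 2 = -n by ring, show -(n : ℤ) - 2 + 1 = -(n + 1) by ring] at this
    rw [show -((n : ℤ) + 2) = -n - 2 by ring]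
    linarith
  obtain ⟨n, rfl | rfl⟩ := Int.eq_nat_or_neg m
  · exact h0.trans_le (forward (Nat.zero_le n))
  · exact h0.trans_le (by simpa using backward (Nat.zero_le n))

namespace pSeq

variable {a b k l k' l' : ℤ} {p q : ℤ → ℤ}

theorem apply_neg_one (hp : pSeq a b k l p) : p (-1) = a * l - k := by
  obtain ⟨h0, h1, hrec⟩ := hp
  have := hrec (-1)
  norm_num [h0, h1] at this
  linarith

theorem sub (hp : pSeq a b k l p) (hq : pSeq a b k' l' q) :
    pSeq a b (k - k') (l - l') (p - q) := by
  obtain ⟨hp0, hp1, hp⟩ := hp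
  obtain ⟨hq0, hq1, hq⟩ := hq
  refine ⟨by simp [hp0, hq0], by simp [hp1, hq1], fun m => ?_⟩
  simp only [Pi.sub_apply, hp m, hq m]
  ring

theorem pos (ha : 2 ≤ a) (hb : 2 ≤ b) (hp : pSeq a b k l p)
    (hl : 0 < l) (hlk : l ≤ k) (hkl : k ≤ (a - 1) * l) (m : ℤ) : 0 < p m := by
  obtain ⟨h0, h1, hrec⟩ := hp
  refine pos_of_recurrence_two_le (fun m => ?_) hrec (by rwa [h0]) (by rwa [h0, h1]) ?_ m
  · split_ifs <;> assumption
  · rw [apply_neg_one ⟨h0, h1, hrec⟩, h0]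
    linarith

theorem casoratian (hp : pSeq a b k l p) (hq : pSeq a b k' l' q) (m : ℤ) :
    q (m + 1) * p m - q m * p (m + 1) = k' * l - l' * k := by
  obtain ⟨hp0, hp1, hp⟩ := hp
  obtain ⟨hq0, hq1, hq⟩ := hq
  have step : ∀ m, q (m + 2) * p (m + 1) - q (m + 1) * p (m + 2)
      = q (m + 1) * p m - q m * p (m + 1) := fun m => by rw [hp m, hq m]; ring
  induction m using Int.induction_on with
  | zero => simp [hp0, hp1, hq0, hq1]
  | succ n ih => rw [add_assoc, one_add_one_eq_two, step, ih]
  | pred n ih =>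
    have := step (-n - 1)
    rw [show -(n : ℤ) - 1 + 2 = -n + 1 by ring, show -(n : ℤ) - 1 + 1 = -n by ring] at this
    rw [show -(n : ℤ) - 1 + 1 = -n by ring, ← this, ih]

end pSeq

theorem q_div_p_strictAnti_general (a b k l : ℤ) (ha : 2 ≤ a) (hb : 2 ≤ b)
    (hl : 1 < l) (hka : k < (a - 1) * l)
    (c : ℤ) (hc1 : 1 ≤ c)
    (hcl : (c : ℚ) / k < 1 / l) (hcr : (1 : ℚ) / l < (c + 1) / k)
    (p : ℤ → ℤ) (hp : pSeq a b k l p)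
    (q : ℤ → ℤ) (hq : pSeq a b c 1 q) :
    (∀ m : ℤ, 0 < (q (m + 1) : ℚ) / (p (m + 1)) ∧
        (q (m + 1) : ℚ) / (p (m + 1)) < (q m : ℚ) / (p m) ∧
        (q m : ℚ) / (p m) < 1) ∧
      StrictAnti (fun m : ℤ => (q m : ℚ) / (p m)) := by
  have hl0 : (0 : ℚ) < l := by exact_mod_cast (by omega : (0 : ℤ) < l)
  have hk0 : (0 : ℚ) < k :=
    (div_pos_iff_of_pos_left (by exact_mod_cast (by omega : (0 : ℤ) < c + 1))).1
      ((one_div_pos.2 hl0).trans hcr)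
  have hclk : c * l < k := by
    rw [div_lt_div_iff₀ hk0 hl0, one_mul] at hcl; exact_mod_cast hcl
  have hkcl : k < (c + 1) * l := by
    rw [div_lt_div_iff₀ hl0 hk0, one_mul] at hcr; exact_mod_cast hcr
  have hca : c + 1 < a := by nlinarith
  have hqpos : ∀ m, 0 < q m := hq.pos ha hb one_pos hc1 (by omega)
  -- `c + l - 1 ≤ c l < k` and `k - c ≤ (c + 1) (l - 1) ≤ (a - 1) (l - 1)`
  have hqp : ∀ m, q m < p m := fun m => sub_pos.1 <| (hp.sub hq).pos ha hb (by omega)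
    (by nlinarith [mul_nonneg (sub_nonneg.2 hc1) (sub_nonneg.2 hl.le)])
    (by nlinarith [mul_le_mul_of_nonneg_right (by omega : c + 1 ≤ a - 1) (sub_nonneg.2 hl.le)]) m
  have hppos : ∀ m, (0 : ℚ) < p m := fun m => by exact_mod_cast (hqpos m).trans (hqp m)
  have hratio : ∀ m : ℤ, 0 < (q (m + 1) : ℚ) / (p (m + 1)) ∧
      (q (m + 1) : ℚ) / (p (m + 1)) < (q m : ℚ) / (p m) ∧
      (q m : ℚ) / (p m) < 1 := fun m => by
    refine ⟨div_pos (by exact_mod_cast hqpos _) (hppos _), ?_, ?_⟩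
    · rw [div_lt_div_iff₀ (hppos _) (hppos m)]
      have := hp.casoratian hq m
      exact_mod_cast (by linarith)
    · rw [div_lt_one (hppos m)]
      exact_mod_cast hqp m
  exact ⟨hratio, strictAnti_int_of_succ_lt fun m => (hratio m).2.1⟩

theorem q_div_p_strictAnti (a b k l : ℤ) (ha : 2 ≤ a) (hb : 2 ≤ b) (hab : 4 < a * b)
    (hl : 1 < l) (hlk : l < k) (hka : k < (a - 1) * l) (hcop : IsCoprime k l)
    (c : ℤ) (hc1 : 1 ≤ c) (hck : c ≤ k - 1)
    (hcl : (c : ℚ) / k < 1 / l) (hcr : (1 : ℚ) / l < (c + 1) / k)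
    (p : ℤ → ℤ) (hp : pSeq a b k l p)
    (q : ℤ → ℤ) (hq : pSeq a b c 1 q) :
    (∀ m : ℤ, 0 < (q (m + 1) : ℚ) / (p (m + 1)) ∧
        (q (m + 1) : ℚ) / (p (m + 1)) < (q m : ℚ) / (p m) ∧
        (q m : ℚ) / (p m) < 1) ∧
      StrictAnti (fun m : ℤ => (q m : ℚ) / (p m)) :=
  q_div_p_strictAnti_general a b k l ha hb hl hka c hc1 hcl hcr p hp q hq
end
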